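/- Let ω₀ > 0, C₀ ∈ ℝ, h ∈ ℝ, and set g₂ = (16/3)ω₀² - 4h and g₃ = 4C₀² - (8/3)ω₀h + (64/27)ω₀³. If v(t) satisfies (dv/dt)² = 4v³ - g₂v - g₃ and q(t)² = (2/3)ω₀ + v(t) with q(t) ≠ 0, then q satisfies (dq/dt)² = -2ω₀q² + q⁴ - C₀²/q² + h. -/

import Mathlib

/-!
Differentiating `q² = (2/3)ω₀ + v` gives `2 q q' = v'`. Under the shift `u = v + (2/3)ω₀` the
Weierstrass cubic becomes `4 (u³ - 2ω₀ u² + h u - C₀²)`, so with `u = q²` the equation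
`(v')² = 4v³ - g₂v - g₃` reads `4 q² (q')² = 4 (q⁶ - 2ω₀ q⁴ + h q² - C₀²)`; dividing by `4 q²` gives
the energy relation.
-/

theorem HasDerivAt.two_mul_mul_eq_of_sq_eq_const_add {𝕜 𝔸 : Type*} [NontriviallyNormedField 𝕜]
    [NormedCommRing 𝔸] [NormedAlgebra 𝕜 𝔸] {q v : 𝕜 → 𝔸} {q' v' c : 𝔸} {t : 𝕜}
    (hq : HasDerivAt q q' t) (hv : HasDerivAt v v' t) (hqv : ∀ s, q s ^ 2 = c + v s) :
    2 * q t * q' = v' := by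
  have hsq : HasDerivAt (fun s ↦ q s ^ 2) (2 * q t * q') t := by
    simpa using hq.fun_pow 2
  exact hsq.unique <| (hv.const_add c).congr_of_eventuallyEq <| .of_forall hqv

theorem weierstrass_cubic_shift {R : Type*} [Field R] [CharZero R] (ω C h u : R) :
    4 * (u - 2 / 3 * ω) ^ 3 - (16 / 3 * ω ^ 2 - 4 * h) * (u - 2 / 3 * ω)
      - (4 * C ^ 2 - 8 / 3 * ω * h + 64 / 27 * ω ^ 3)
      = 4 * (u ^ 3 - 2 * ω * u ^ 2 + h * u - C ^ 2) := by
  ring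

theorem energy_of_weierstrass_cubic {R : Type*} [Field R] [CharZero R] {ω C h q q' : R}
    (hq : q ≠ 0)
    (hcubic : (2 * q * q') ^ 2 = 4 * (q ^ 2 - 2 / 3 * ω) ^ 3
      - (16 / 3 * ω ^ 2 - 4 * h) * (q ^ 2 - 2 / 3 * ω)
      - (4 * C ^ 2 - 8 / 3 * ω * h + 64 / 27 * ω ^ 3)) :
    q' ^ 2 = -(2 * ω) * q ^ 2 + q ^ 4 - C ^ 2 / q ^ 2 + h := by
  rw [weierstrass_cubic_shift] at hcubic
  field_simp
  linear_combination hcubic / 4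

theorem stmt4_general (ω₀ C₀ h : ℝ) (v w q qd : ℝ → ℂ)
    (hv : ∀ t : ℝ, HasDerivAt v (w t) t)
    (hcubic : ∀ t : ℝ, (w t) ^ 2 =
      4 * (v t) ^ 3 - (((16 / 3) * ω₀ ^ 2 - 4 * h : ℝ) : ℂ) * v t
        - ((4 * C₀ ^ 2 - (8 / 3) * ω₀ * h + (64 / 27) * ω₀ ^ 3 : ℝ) : ℂ))
    (hq : ∀ t : ℝ, (q t) ^ 2 = ((2 / 3 : ℝ) : ℂ) * (ω₀ : ℂ) + v t)
    (hqd : ∀ t : ℝ, HasDerivAt q (qd t) t)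
    (hne : ∀ t : ℝ, q t ≠ 0) :
    ∀ t : ℝ, (qd t) ^ 2 =
      -(2 * (ω₀ : ℂ)) * (q t) ^ 2 + (q t) ^ 4 - (C₀ : ℂ) ^ 2 / (q t) ^ 2 + (h : ℂ) := by
  intro t
  have hw : 2 * q t * qd t = w t := (hqd t).two_mul_mul_eq_of_sq_eq_const_add (hv t) hq
  have hvq : v t = q t ^ 2 - 2 / 3 * ω₀ := by
    rw [hq t]
    push_cast
    ring
  refine energy_of_weierstrass_cubic (hne t) ?_
  rw [hw, hcubic t, hvq]
  push_cast
  ring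

/-- If `v` satisfies the Weierstrass cubic `(v')² = 4v³ - g₂v - g₃` with
`g₂ = (16/3)ω₀² - 4h`, `g₃ = 4C₀² - (8/3)ω₀h + (64/27)ω₀³`, and `q² = (2/3)ω₀ + v`
with `q ≠ 0`, then `(q')² = -2ω₀q² + q⁴ - C₀²/q² + h`. -/
theorem stmt4 (ω₀ C₀ h : ℝ) (hω₀ : 0 < ω₀) (v w q qd : ℝ → ℂ)
    (hv : ∀ t : ℝ, HasDerivAt v (w t) t)
    (hcubic : ∀ t : ℝ, (w t) ^ 2 =
      4 * (v t) ^ 3 - (((16 / 3) * ω₀ ^ 2 - 4 * h : ℝ) : ℂ) * v t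
        - ((4 * C₀ ^ 2 - (8 / 3) * ω₀ * h + (64 / 27) * ω₀ ^ 3 : ℝ) : ℂ))
    (hq : ∀ t : ℝ, (q t) ^ 2 = ((2 / 3 : ℝ) : ℂ) * (ω₀ : ℂ) + v t)
    (hqd : ∀ t : ℝ, HasDerivAt q (qd t) t)
    (hne : ∀ t : ℝ, q t ≠ 0) :
    ∀ t : ℝ, (qd t) ^ 2 =
      -(2 * (ω₀ : ℂ)) * (q t) ^ 2 + (q t) ^ 4 - (C₀ : ℂ) ^ 2 / (q t) ^ 2 + (h : ℂ) :=
  stmt4_general ω₀ C₀ h v w q qd hv hcubic hq hqd hne
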